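/- arXiv:1804.08921 — 5 statements merged into one kernel-verified Lean document; each statement's English description precedes it below -/
import Mathlib

section
/- Summing the double series first over n: for complex numbers q, x_1,…,x_M, y_1,…,y_N, a_1,…,a_M, b_1,…,b_N with |q| < 1, |x_i| < 1 and |y_j| < 1 for all i, j, such that (b_j y_j ; q)_n ≠ 0 for all j and all n ∈ ℕ, (y_j ; q)_∞ ≠ 0 for all j, and such that the doubly-indexed family (m,n) ∈ ℕ^M × ℕ^N ↦ ∏_{i=1}^M ((a_i;q)_{m_i}/(q;q)_{m_i}) x_i^{m_i} · ∏_{j=1}^N ((b_j;q)_{n_j}/(q;q)_{n_j}) y_j^{n_j} · q^{|m||n|} is absolutely summable, its sum S equals ∏_{j=1}^N ((b_j y_j;q)_∞/(y_j;q)_∞) · F_{N,M}({y_j},{a_i};{b_j y_j};{x_i}), where in this F the upper parameters are y_1,…,y_N, the b-type parameters are a_1,…,a_M, the lower parameters are b_1 y_1,…,b_N y_N, and the variables are x_1,…,x_M. -/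
open scoped BigOperators

noncomputable def qPoch (q a : ℂ) (n : ℕ) : ℂ :=
  ∏ k ∈ Finset.range n, (1 - q ^ k * a)

noncomputable def qPochInf (q a : ℂ) : ℂ :=
  ∏' k : ℕ, (1 - q ^ k * a)

/-- The generalized `q`-hypergeometric series `F_{N,M}` with upper parameters `a`,
`b`-type parameters `b`, lower parameters `c` and variables `y`. -/
noncomputable def qHyperF (q : ℂ) {N M : ℕ} (a : Fin N → ℂ) (b : Fin M → ℂ)
    (c : Fin N → ℂ) (y : Fin M → ℂ) : ℂ :=
  ∑' m : Fin M → ℕ,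
    (∏ j, qPoch q (a j) (∑ i, m i) / qPoch q (c j) (∑ i, m i)) *
      (∏ i, qPoch q (b i) (m i) / qPoch q q (m i)) * ∏ i, y i ^ m i

/-!
Summing over `n` first, the inner sum factors over `j` into q-binomial series
`φ_b(z) = ∑ₙ (b;q)ₙ/(q;q)ₙ zⁿ` at `z = q^{|m|} y_j`. The q-binomial theorem
`φ_a(z) = (az;q)_∞/(z;q)_∞` comes from the functional equation `(1 - z) φ_a(z) = (1 - az) φ_a(qz)`,
iterated `n` times, together with `φ_a(qⁿz) → 1` (dominated convergence). Splitting off the first `|m|` factors of both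
infinite products turns `φ_b(q^{|m|} y)` into `(by;q)_∞/(y;q)_∞ · (y;q)_{|m|}/(by;q)_{|m|}`,
which is the summand of `F` up to the constant factor.
-/

open Filter Topology Finset

section FinPiProd

variable {R β : Type*} [NormedCommRing R]

theorem summable_norm_prod_fin_pi {N : ℕ} {g : Fin N → β → R}
    (hg : ∀ j, Summable fun n => ‖g j n‖) :
    Summable fun f : Fin N → β => ‖∏ j, g j (f j)‖ := by
  induction N with
  | zero => exact .of_finite
  | succ N ih =>
    rw [← (Fin.consEquiv fun _ => β).summable_iff]
    refine ((hg 0).mul_norm (ih fun j => hg j.succ)).congr fun p => ?_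
    simp [Fin.consEquiv, Fin.prod_univ_succ]

theorem tsum_prod_fin_pi [CompleteSpace R] {N : ℕ} {g : Fin N → β → R}
    (hg : ∀ j, Summable fun n => ‖g j n‖) :
    ∑' f : Fin N → β, ∏ j, g j (f j) = ∏ j, ∑' n, g j n := by
  induction N with
  | zero => simp
  | succ N ih =>
    rw [← (Fin.consEquiv fun _ => β).tsum_eq, Fin.prod_univ_succ, ← ih fun j => hg j.succ,
      tsum_mul_tsum_of_summable_norm (hg 0) (summable_norm_prod_fin_pi fun j => hg j.succ)]
    simp [Fin.consEquiv, Fin.prod_univ_succ]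

end FinPiProd

theorem qPoch_zero (q a : ℂ) : qPoch q a 0 = 1 := prod_range_zero _

theorem qPoch_succ (q a : ℂ) (n : ℕ) : qPoch q a (n + 1) = qPoch q a n * (1 - q ^ n * a) :=
  prod_range_succ _ _

variable {q : ℂ}

theorem summable_norm_pow_mul (hq : ‖q‖ < 1) (a : ℂ) : Summable fun k : ℕ => ‖q ^ k * a‖ := by
  simpa [norm_mul, norm_pow] using
    (summable_geometric_of_lt_one (norm_nonneg q) hq).mul_right ‖a‖

theorem multipliable_one_sub_pow_mul (hq : ‖q‖ < 1) (a : ℂ) :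
    Multipliable fun k : ℕ => 1 - q ^ k * a := by
  simpa [sub_eq_add_neg] using
    multipliable_one_add_of_summable (f := fun k : ℕ => -(q ^ k * a))
      (by simpa using summable_norm_pow_mul hq a)

theorem tendsto_qPoch (hq : ‖q‖ < 1) (a : ℂ) :
    Tendsto (qPoch q a) atTop (𝓝 (qPochInf q a)) :=
  (multipliable_one_sub_pow_mul hq a).hasProd.tendsto_prod_nat

theorem qPochInf_eq_qPoch_mul (hq : ‖q‖ < 1) (a : ℂ) (s : ℕ) :
    qPochInf q a = qPoch q a s * qPochInf q (q ^ s * a) := by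
  have h : Multipliable fun k => 1 - q ^ (k + s) * a := by
    simpa only [pow_add, mul_assoc] using multipliable_one_sub_pow_mul hq (q ^ s * a)
  rw [qPochInf, qPoch, qPochInf, ← h.prod_mul_tprod_nat_mul' (f := fun k => 1 - q ^ k * a)]
  simp only [pow_add, mul_assoc]

theorem norm_pow_mul_le (hq : ‖q‖ < 1) (a : ℂ) (k : ℕ) : ‖q ^ k * a‖ ≤ ‖a‖ := by
  rw [norm_mul, norm_pow]
  exact mul_le_of_le_one_left (norm_nonneg a) (pow_le_one₀ (norm_nonneg q) hq.le)

theorem one_sub_pow_mul_ne_zero (hq : ‖q‖ < 1) {a : ℂ} (ha : ‖a‖ < 1) (k : ℕ) :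
    1 - q ^ k * a ≠ 0 := by
  refine sub_ne_zero.mpr fun h => ?_
  have := (norm_pow_mul_le hq a k).trans_lt ha
  simp [← h] at this

theorem qPoch_ne_zero (hq : ‖q‖ < 1) {a : ℂ} (ha : ‖a‖ < 1) (n : ℕ) : qPoch q a n ≠ 0 :=
  prod_ne_zero_iff.mpr fun k _ => one_sub_pow_mul_ne_zero hq ha k

theorem qPochInf_ne_zero (hq : ‖q‖ < 1) {a : ℂ} (ha : ‖a‖ < 1) : qPochInf q a ≠ 0 := by
  simpa [qPochInf, sub_eq_add_neg] using
    tprod_one_add_ne_zero_of_summable (f := fun k : ℕ => -(q ^ k * a))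
      (by simpa [sub_eq_add_neg] using one_sub_pow_mul_ne_zero hq ha)
      (by simpa using summable_norm_pow_mul hq a)

theorem tsum_sub_mul_tsum_eq {R : Type*} [Ring R] [TopologicalSpace R] [IsTopologicalRing R]
    [T2Space R] {u v : ℕ → R} (hu : Summable u) (hv : Summable v) (w : R) :
    ∑' n, u n - w * ∑' n, v n = u 0 + ∑' n, (u (n + 1) - w * v n) := by
  rw [hu.tsum_eq_zero_add, ← hv.tsum_mul_left w,
    Summable.tsum_sub ((summable_nat_add_iff 1).2 hu) (hv.mul_left w)]
  abel

noncomputable def qBinomialSeries (q a z : ℂ) : ℂ :=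
  ∑' n : ℕ, qPoch q a n / qPoch q q n * z ^ n

theorem tendsto_qPoch_div_qPoch (hq : ‖q‖ < 1) (a : ℂ) :
    Tendsto (fun n => qPoch q a n / qPoch q q n) atTop (𝓝 (qPochInf q a / qPochInf q q)) :=
  (tendsto_qPoch hq a).div (tendsto_qPoch hq q) (qPochInf_ne_zero hq hq)

theorem exists_norm_qPoch_div_qPoch_le (hq : ‖q‖ < 1) (a : ℂ) :
    ∃ C, ∀ n, ‖qPoch q a n / qPoch q q n‖ ≤ C := by
  obtain ⟨C, hC⟩ := (tendsto_qPoch_div_qPoch hq a).norm.bddAbove_range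
  exact ⟨C, fun n => hC ⟨n, rfl⟩⟩

theorem summable_norm_qBinomialSeries_term (hq : ‖q‖ < 1) (a : ℂ) {z : ℂ} (hz : ‖z‖ < 1) :
    Summable fun n => ‖qPoch q a n / qPoch q q n * z ^ n‖ := by
  obtain ⟨C, hC⟩ := exists_norm_qPoch_div_qPoch_le hq a
  refine .of_nonneg_of_le (fun _ => norm_nonneg _) (fun n => ?_)
    ((summable_geometric_of_lt_one (norm_nonneg z) hz).mul_left C)
  rw [norm_mul, norm_pow]
  exact mul_le_mul_of_nonneg_right (hC n) (by positivity)

theorem qPoch_div_qPoch_succ_mul (hq : ‖q‖ < 1) (a : ℂ) (n : ℕ) :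
    qPoch q a (n + 1) / qPoch q q (n + 1) * (1 - q ^ (n + 1))
      = qPoch q a n / qPoch q q n * (1 - q ^ n * a) := by
  have h := one_sub_pow_mul_ne_zero hq hq n
  rw [qPoch_succ, qPoch_succ q q, pow_succ]
  field_simp [qPoch_ne_zero hq hq n]

theorem qBinomialSeries_functional_eq (hq : ‖q‖ < 1) (a : ℂ) {z : ℂ} (hz : ‖z‖ < 1) :
    (1 - z) * qBinomialSeries q a z = (1 - a * z) * qBinomialSeries q a (q * z) := by
  have hqz : ‖q * z‖ < 1 := by simpa using (norm_pow_mul_le hq z 1).trans_lt hz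
  have S₁ := (summable_norm_qBinomialSeries_term hq a hz).of_norm
  have S₂ := (summable_norm_qBinomialSeries_term hq a hqz).of_norm
  rw [sub_mul, sub_mul, one_mul, one_mul, qBinomialSeries, qBinomialSeries,
    tsum_sub_mul_tsum_eq S₁ S₁, tsum_sub_mul_tsum_eq S₂ S₂, pow_zero, pow_zero]
  congr 1
  exact tsum_congr fun n => by
    linear_combination z ^ (n + 1) * qPoch_div_qPoch_succ_mul hq a n

theorem qPoch_mul_qBinomialSeries (hq : ‖q‖ < 1) (a : ℂ) {z : ℂ} (hz : ‖z‖ < 1) (n : ℕ) :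
    qPoch q z n * qBinomialSeries q a z
      = qPoch q (a * z) n * qBinomialSeries q a (q ^ n * z) := by
  induction n with
  | zero => simp [qPoch_zero]
  | succ n ih =>
    have hfe := qBinomialSeries_functional_eq hq a ((norm_pow_mul_le hq z n).trans_lt hz)
    rw [qPoch_succ, qPoch_succ, pow_succ', mul_assoc q]
    linear_combination (1 - q ^ n * z) * ih + qPoch q (a * z) n * hfe

theorem tendsto_qBinomialSeries_pow_mul (hq : ‖q‖ < 1) (a : ℂ) {z : ℂ} (hz : ‖z‖ < 1) :
    Tendsto (fun n => qBinomialSeries q a (q ^ n * z)) atTop (𝓝 1) := by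
  obtain ⟨C, hC⟩ := exists_norm_qPoch_div_qPoch_le hq a
  have hzero : Tendsto (fun n => q ^ n * z) atTop (𝓝 0) := by
    simpa using (tendsto_pow_atTop_nhds_zero_of_norm_lt_one hq).mul_const z
  have hlim := tendsto_tsum_of_dominated_convergence (bound := fun k => C * ‖z‖ ^ k)
    ((summable_geometric_of_lt_one (norm_nonneg z) hz).mul_left C)
    (fun k => (hzero.pow k).const_mul (qPoch q a k / qPoch q q k))
    (Eventually.of_forall fun n k => by
      rw [norm_mul, norm_pow]
      exact mul_le_mul (hC k) (pow_le_pow_left₀ (norm_nonneg _) (norm_pow_mul_le hq z n) k)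
        (by positivity) ((norm_nonneg _).trans (hC 0)))
  rwa [tsum_eq_single 0 fun k hk => by simp [hk], pow_zero, qPoch_zero, qPoch_zero,
    div_one, one_mul] at hlim

theorem qBinomialSeries_eq (hq : ‖q‖ < 1) (a : ℂ) {z : ℂ} (hz : ‖z‖ < 1) :
    qBinomialSeries q a z = qPochInf q (a * z) / qPochInf q z := by
  rw [eq_div_iff (qPochInf_ne_zero hq hz), mul_comm]
  refine tendsto_nhds_unique ((tendsto_qPoch hq z).mul_const _) ?_
  simpa using ((tendsto_qPoch hq (a * z)).mul (tendsto_qBinomialSeries_pow_mul hq a hz)).congr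
    fun n => (qPoch_mul_qBinomialSeries hq a hz n).symm

theorem qBinomialSeries_pow_mul_eq (hq : ‖q‖ < 1) (a : ℂ) {z : ℂ} (hz : ‖z‖ < 1)
    (haz : ∀ n, qPoch q (a * z) n ≠ 0) (s : ℕ) :
    qBinomialSeries q a (q ^ s * z)
      = qPochInf q (a * z) / qPochInf q z * (qPoch q z s / qPoch q (a * z) s) := by
  have hsz := (norm_pow_mul_le hq z s).trans_lt hz
  rw [qBinomialSeries_eq hq a hsz, qPochInf_eq_qPoch_mul hq z s,
    qPochInf_eq_qPoch_mul hq (a * z) s, mul_left_comm a]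
  field_simp [haz s, qPoch_ne_zero hq hz s, qPochInf_ne_zero hq hsz]

theorem statement0_general (M N : ℕ) (q : ℂ) (x a : Fin M → ℂ) (y b : Fin N → ℂ)
    (hq : ‖q‖ < 1)
    (hy : ∀ j, ‖y j‖ < 1)
    (hby : ∀ j n, qPoch q (b j * y j) n ≠ 0)
    (hsum : Summable (fun p : (Fin M → ℕ) × (Fin N → ℕ) =>
      ‖(∏ i, qPoch q (a i) (p.1 i) / qPoch q q (p.1 i) * x i ^ p.1 i) *
        (∏ j, qPoch q (b j) (p.2 j) / qPoch q q (p.2 j) * y j ^ p.2 j) *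
        q ^ ((∑ i, p.1 i) * (∑ j, p.2 j))‖)) :
    (∑' p : (Fin M → ℕ) × (Fin N → ℕ),
        (∏ i, qPoch q (a i) (p.1 i) / qPoch q q (p.1 i) * x i ^ p.1 i) *
          (∏ j, qPoch q (b j) (p.2 j) / qPoch q q (p.2 j) * y j ^ p.2 j) *
          q ^ ((∑ i, p.1 i) * (∑ j, p.2 j)))
      = (∏ j, qPochInf q (b j * y j) / qPochInf q (y j)) *
        qHyperF q y a (fun j => b j * y j) x := by
  have inner (m : Fin M → ℕ) :
      ∑' n : Fin N → ℕ, (∏ i, qPoch q (a i) (m i) / qPoch q q (m i) * x i ^ m i) *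
          (∏ j, qPoch q (b j) (n j) / qPoch q q (n j) * y j ^ n j) *
          q ^ ((∑ i, m i) * (∑ j, n j))
        = (∏ i, qPoch q (a i) (m i) / qPoch q q (m i) * x i ^ m i) *
          ∏ j, qBinomialSeries q (b j) (q ^ (∑ i, m i) * y j) := by
    simp only [qBinomialSeries]
    rw [← tsum_prod_fin_pi fun j =>
      summable_norm_qBinomialSeries_term hq (b j) ((norm_pow_mul_le hq _ _).trans_lt (hy j)),
      ← tsum_mul_left]
    refine tsum_congr fun n => ?_
    rw [pow_mul, ← prod_pow_eq_pow_sum, mul_assoc, ← prod_mul_distrib]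
    exact congrArg _ (prod_congr rfl fun j _ => by ring)
  rw [hsum.of_norm.tsum_prod, tsum_congr inner, qHyperF, ← tsum_mul_left]
  refine tsum_congr fun m => ?_
  simp only [qBinomialSeries_pow_mul_eq hq _ (hy _) (hby _), prod_mul_distrib]
  ring

theorem statement0 (M N : ℕ) (q : ℂ) (x a : Fin M → ℂ) (y b : Fin N → ℂ)
    (hq : ‖q‖ < 1)
    (hx : ∀ i, ‖x i‖ < 1) (hy : ∀ j, ‖y j‖ < 1)
    (hby : ∀ j n, qPoch q (b j * y j) n ≠ 0)
    (hyinf : ∀ j, qPochInf q (y j) ≠ 0)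
    (hsum : Summable (fun p : (Fin M → ℕ) × (Fin N → ℕ) =>
      ‖(∏ i, qPoch q (a i) (p.1 i) / qPoch q q (p.1 i) * x i ^ p.1 i) *
        (∏ j, qPoch q (b j) (p.2 j) / qPoch q q (p.2 j) * y j ^ p.2 j) *
        q ^ ((∑ i, p.1 i) * (∑ j, p.2 j))‖)) :
    (∑' p : (Fin M → ℕ) × (Fin N → ℕ),
        (∏ i, qPoch q (a i) (p.1 i) / qPoch q q (p.1 i) * x i ^ p.1 i) *
          (∏ j, qPoch q (b j) (p.2 j) / qPoch q q (p.2 j) * y j ^ p.2 j) *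
          q ^ ((∑ i, p.1 i) * (∑ j, p.2 j)))
      = (∏ j, qPochInf q (b j * y j) / qPochInf q (y j)) *
        qHyperF q y a (fun j => b j * y j) x :=
  statement0_general M N q x a y b hq hy hby hsum
end

section
/- Action of the exchange operator σ_i on p_{1,i} (first component of Proposition 3.1): let K be a field (e.g. ℂ), let u, x_0, x_1, …, x_M, a_1, …, a_M ∈ K, fix 1 ≤ i ≤ M−1, and assume 1 − a_k x_k u ≠ 0 for 1 ≤ k ≤ i+1 and x_i − a_{i+1} x_{i+1} ≠ 0. Define p_{1,k}(u) = ((1 − x_0 u)/(1 − a_k x_k u)) · ∏_{l=1}^{k-1} (1 − x_l u)/(1 − a_l x_l u). Then the function obtained from p_{1,i} by exchanging (x_i, a_i) with (x_{i+1}, a_{i+1}), namely σ_i(p_{1,i})(u) = ((1 − x_0 u)/(1 − a_{i+1} x_{i+1} u)) · ∏_{l=1}^{i-1} (1 − x_l u)/(1 − a_l x_l u), satisfies (x_i − a_{i+1} x_{i+1}) · σ_i(p_{1,i})(u) = (1 − a_i) x_i · p_{1,i}(u) + (a_i x_i − a_{i+1} x_{i+1}) · p_{1,i+1}(u). -/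
open scoped BigOperators

/-! σ_i(p_{1,i}), p_{1,i} and p_{1,i+1} share the factor `(1 - x_0 u) ∏_{l<i} (1 - x_l u)/(1 - a_l x_l u)`;
after dividing it out, the claim is a two-term partial fraction identity in the variables
`x = x_i`, `a = a_i`, `y = x_{i+1}`, `b = a_{i+1}`. -/

/-- The rational function `p_{1,k}(u) = ((1 - x_0 u)/(1 - a_k x_k u)) ·
∏_{l=1}^{k-1} (1 - x_l u)/(1 - a_l x_l u)`. -/
def pOne {K : Type*} [Field K] (x a : ℕ → K) (k : ℕ) (u : K) : K :=
  (1 - x 0 * u) / (1 - a k * x k * u) *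
    ∏ l ∈ Finset.Ico 1 k, (1 - x l * u) / (1 - a l * x l * u)

theorem sub_div_one_sub_eq_add {K : Type*} [Field K] {u x y a b : K}
    (hx : 1 - a * x * u ≠ 0) (hy : 1 - b * y * u ≠ 0) :
    (x - b * y) / (1 - b * y * u)
      = (1 - a) * x / (1 - a * x * u)
        + (a * x - b * y) / (1 - b * y * u) * ((1 - x * u) / (1 - a * x * u)) := by
  rw [div_mul_div_comm, div_add_div _ _ hx (mul_ne_zero hy hx),
    div_eq_div_iff hy (mul_ne_zero hx (mul_ne_zero hy hx))]
  ring

theorem pOne_succ {K : Type*} [Field K] (x a : ℕ → K) {k : ℕ} (hk : 1 ≤ k) (u : K) :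
    pOne x a (k + 1) u
      = (1 - x 0 * u) / (1 - a (k + 1) * x (k + 1) * u) *
          (∏ l ∈ Finset.Ico 1 k, (1 - x l * u) / (1 - a l * x l * u)) *
          ((1 - x k * u) / (1 - a k * x k * u)) := by
  rw [pOne, Finset.prod_Ico_succ_top hk, ← mul_assoc]

theorem statement7_general {K : Type*} [Field K] (u : K) (x a : ℕ → K)
    (i : ℕ) (hi1 : 1 ≤ i)
    (hden : ∀ k, 1 ≤ k → k ≤ i + 1 → 1 - a k * x k * u ≠ 0) :
    (x i - a (i + 1) * x (i + 1)) *
        ((1 - x 0 * u) / (1 - a (i + 1) * x (i + 1) * u) *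
          ∏ l ∈ Finset.Ico 1 i, (1 - x l * u) / (1 - a l * x l * u))
      = (1 - a i) * x i * pOne x a i u +
        (a i * x i - a (i + 1) * x (i + 1)) * pOne x a (i + 1) u := by
  have key := sub_div_one_sub_eq_add (hden i hi1 (by omega)) (hden (i + 1) (by omega) le_rfl)
  rw [pOne_succ x a hi1, pOne]
  set P := ∏ l ∈ Finset.Ico 1 i, (1 - x l * u) / (1 - a l * x l * u)
  linear_combination ((1 - x 0 * u) * P) * key

theorem statement7 {K : Type*} [Field K] (M : ℕ) (u : K) (x a : ℕ → K)
    (i : ℕ) (hi1 : 1 ≤ i) (hiM : i + 1 ≤ M)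
    (hden : ∀ k, 1 ≤ k → k ≤ i + 1 → 1 - a k * x k * u ≠ 0)
    (hx : x i - a (i + 1) * x (i + 1) ≠ 0) :
    (x i - a (i + 1) * x (i + 1)) *
        ((1 - x 0 * u) / (1 - a (i + 1) * x (i + 1) * u) *
          ∏ l ∈ Finset.Ico 1 i, (1 - x l * u) / (1 - a l * x l * u))
      = (1 - a i) * x i * pOne x a i u +
        (a i * x i - a (i + 1) * x (i + 1)) * pOne x a (i + 1) u :=
  statement7_general u x a i hi1 hden
end

section
/- Factorization identity of Proposition 4.4 (the shape of the Lax matrices): let K be a field and q, κ, t, x_0, a, r ∈ K with κ ≠ 0 (κ plays the role of q^{−γ_1}, a = a_{M−1}, t = x_{M−1}, r = r_{M−1}). Set N = (1 − a t) r + x_0 − 1 and D = ((1 − a) r − 1) t + x_0, and assume N ≠ 0, D ≠ 0, (x_0 − 1) + r t (1 − a) ≠ 0, r ≠ 0, t ≠ 0. Define u = (t(1 − a)N + (x_0 − 1)D) / (κ N ((x_0 − 1) + r t (1 − a))) and p = κ N u / D, and assume u ≠ 0 and p ≠ 0. Then for every z ∈ K with t − z ≠ 0 and x_0 − z ≠ 0: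 [[1/r,1],[z, r t]]^{-1} [[1/r,1],[z, a r t]] · [[1,1],[z,x_0]]^{-1} [[1,1],[z,1]] · [[1,0],[0,κ]] = [[p,1],[z, x_0/p]]^{-1} [[p,1],[z, 1/p]] · [[1,0],[0,κ]] · [[u,1],[z, t/u]]^{-1} [[u,1],[z, a t/u]]. In particular u is independent of z, and p = κ((1 − a t) r + x_0 − 1) u / ((−1 + (1 − a) r) t + x_0). -/
open scoped Matrix

/-!
A factor `X⁻¹ Y` with `X = [[α, 1], [z, β]]` and `Y = [[α, 1], [z, β']]` is upper triangular with
`1` in the top left corner, because `X` and `Y` share their first row and column. Both sides of the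
identity are therefore products of such matrices and `diag(1, κ)`, and their diagonals agree
termwise. What remains is one scalar equation between the upper right entries; it is affine in `z`,
and both of its coefficients follow from the defining relations of `u` and `p`.
-/

theorem fin_two_inv_mul_eq_upperTriangular {K : Type*} [Field K] {α β β' c c' : K}
    (z : K) (hc : α * β = c) (hc' : α * β' = c') (hcz : c - z ≠ 0) :
    (!![α, 1; z, β])⁻¹ * !![α, 1; z, β'] = !![1, (β - β') / (c - z); 0, (c' - z) / (c - z)] := by
  subst hc hc'
  rw [Matrix.inv_def, Matrix.adjugate_fin_two_of, Matrix.det_fin_two_of, one_mul,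
    Ring.inverse_eq_inv', Matrix.smul_mul, Matrix.mul_fin_two]
  ext i j
  fin_cases i <;> fin_cases j <;>
    simp only [Fin.zero_eta, Fin.mk_one, Fin.isValue, Matrix.smul_apply, Matrix.of_apply,
      Matrix.cons_val', Matrix.cons_val_zero, Matrix.cons_val_one, Matrix.cons_val_fin_one,
      smul_eq_mul]
  · field_simp; ring
  all_goals ring

theorem upperTriangular_mul_mul_diagonal_eq {K : Type*} [Field K] {κ b₁ d₁ b₂ d₂ b₃ b₄ : K}
    (h : (b₂ + b₁ * d₂) * κ = b₄ + b₃ * κ * d₁) :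
    !![1, b₁; 0, d₁] * !![1, b₂; 0, d₂] * !![1, 0; 0, κ] =
      !![1, b₃; 0, d₂] * !![1, 0; 0, κ] * !![1, b₄; 0, d₁] := by
  simp only [Matrix.mul_fin_two, mul_one, mul_zero, one_mul, zero_mul, add_zero, zero_add]
  rw [h, mul_right_comm d₂ κ d₁, mul_comm d₂ d₁]

theorem statement15_general {K : Type*} [Field K] (κ t x0 a r u p : K)
    (hκ : κ ≠ 0)
    (hN : (1 - a * t) * r + x0 - 1 ≠ 0)
    (hD : ((1 - a) * r - 1) * t + x0 ≠ 0)
    (hE : (x0 - 1) + r * t * (1 - a) ≠ 0)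
    (hr : r ≠ 0)
    (hu_def : u = (t * (1 - a) * ((1 - a * t) * r + x0 - 1) +
        (x0 - 1) * (((1 - a) * r - 1) * t + x0)) /
      (κ * ((1 - a * t) * r + x0 - 1) * ((x0 - 1) + r * t * (1 - a))))
    (hp_def : p = κ * ((1 - a * t) * r + x0 - 1) * u / (((1 - a) * r - 1) * t + x0))
    (hu : u ≠ 0) (hp : p ≠ 0)
    (z : K) (htz : t - z ≠ 0) (hx0z : x0 - z ≠ 0) :
    (!![1 / r, 1; z, r * t])⁻¹ * !![1 / r, 1; z, a * r * t] *
        ((!![1, 1; z, x0])⁻¹ * !![1, 1; z, 1]) * !![1, 0; 0, κ]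
      = (!![p, 1; z, x0 / p])⁻¹ * !![p, 1; z, 1 / p] * !![1, 0; 0, κ] *
          ((!![u, 1; z, t / u])⁻¹ * !![u, 1; z, a * t / u]) := by
  have hU : κ * ((1 - a * t) * r + x0 - 1) * ((x0 - 1) + r * t * (1 - a)) * u
      = t * (1 - a) * ((1 - a * t) * r + x0 - 1) + (x0 - 1) * (((1 - a) * r - 1) * t + x0) := by
    rw [hu_def, mul_div_cancel₀ _ (mul_ne_zero (mul_ne_zero hκ hN) hE)]
  have hP : p * (((1 - a) * r - 1) * t + x0) = κ * ((1 - a * t) * r + x0 - 1) * u := by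
    rw [hp_def, div_mul_cancel₀ _ hD]
  rw [fin_two_inv_mul_eq_upperTriangular z
      (by field_simp : 1 / r * (r * t) = t) (by field_simp : 1 / r * (a * r * t) = a * t) htz,
    fin_two_inv_mul_eq_upperTriangular z (one_mul x0) (one_mul 1) hx0z,
    fin_two_inv_mul_eq_upperTriangular z
      (by field_simp : p * (x0 / p) = x0) (by field_simp : p * (1 / p) = 1) hx0z,
    fin_two_inv_mul_eq_upperTriangular z
      (by field_simp : u * (t / u) = t) (by field_simp : u * (a * t / u) = a * t) htz]
  apply upperTriangular_mul_mul_diagonal_eq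
  field_simp
  refine mul_right_cancel₀ (mul_ne_zero hD hE) ?_
  linear_combination
    (((x0 - 1) * (t - z) + r * t * (1 - a) * (1 - z)) * κ * u - (x0 - z) * t * (1 - a)) *
        (x0 - 1 + r * t * (1 - a)) * hP +
      κ * u * ((x0 - 1) * (t - z) + r * t * (1 - a) * (1 - z)) * hU

theorem statement15 {K : Type*} [Field K] (q κ t x0 a r u p : K)
    (hκ : κ ≠ 0)
    (hN : (1 - a * t) * r + x0 - 1 ≠ 0)
    (hD : ((1 - a) * r - 1) * t + x0 ≠ 0)
    (hE : (x0 - 1) + r * t * (1 - a) ≠ 0)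
    (hr : r ≠ 0) (ht : t ≠ 0)
    (hu_def : u = (t * (1 - a) * ((1 - a * t) * r + x0 - 1) +
        (x0 - 1) * (((1 - a) * r - 1) * t + x0)) /
      (κ * ((1 - a * t) * r + x0 - 1) * ((x0 - 1) + r * t * (1 - a))))
    (hp_def : p = κ * ((1 - a * t) * r + x0 - 1) * u / (((1 - a) * r - 1) * t + x0))
    (hu : u ≠ 0) (hp : p ≠ 0)
    (z : K) (htz : t - z ≠ 0) (hx0z : x0 - z ≠ 0) :
    (!![1 / r, 1; z, r * t])⁻¹ * !![1 / r, 1; z, a * r * t] *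
        ((!![1, 1; z, x0])⁻¹ * !![1, 1; z, 1]) * !![1, 0; 0, κ]
      = (!![p, 1; z, x0 / p])⁻¹ * !![p, 1; z, 1 / p] * !![1, 0; 0, κ] *
          ((!![u, 1; z, t / u])⁻¹ * !![u, 1; z, a * t / u]) :=
  statement15_general κ t x0 a r u p hκ hN hD hE hr hu_def hp_def hu hp z htz hx0z
end

section
/- First elementary matrix move in the proof of Proposition 4.1 (exchange of X_k X_l^{-1} into X'_l{}^{-1} X'_k, stated in cross-multiplied form): let K be a field, and let z, u_k, u_l, c_k, c_l ∈ K with u_k ≠ 0, u_l ≠ 0, u_k ≠ u_l, and c_k u_l − c_l u_k ≠ 0. Define u'_k = (c_k u_l − c_l u_k)/((u_k − u_l) u_l) and u'_l = (c_k u_l − c_l u_k)/((u_k − u_l) u_k). Then [[u'_l, 1],[z, c_l/u'_l]] · [[u_k, 1],[z, c_k/u_k]] = [[u'_k, 1],[z, c_k/u'_k]] · [[u_l, 1],[z, c_l/u_l]]; equivalently, whenever the relevant determinants are nonzero, [[u_k,1],[z,c_k/u_k]] · [[u_l,1],[z,c_l/u_l]]^{-1} = [[u'_l,1],[z,c_l/u'_l]]^{-1}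 · [[u'_k,1],[z,c_k/u'_k]]. -/
/-!
The product `X(a, d) X(u, c)` of factors `X(u, c) = [[u, 1], [z, c / u]]` depends only on `a u`,
`a + c / u` and `u + d / a`. With `N = c_k u_l - c_l u_k`, the new parameters are chosen so that
`u'_l u_k = u'_k u_l = N / (u_k - u_l)`, and the two sums then agree by a rational identity.
Each factor has determinant `c - z` once `u ≠ 0`, so the cross-multiplied identity divides out.
-/

open scoped Matrix

namespace Matrix

theorem mul_inv_eq_inv_mul_of_mul_eq_mul {n R : Type*} [Fintype n] [DecidableEq n] [CommRing R]
    {A B C D : Matrix n n R} (hA : IsUnit A.det) (hD : IsUnit D.det) (h : A * B = C * D) :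
    B * D⁻¹ = A⁻¹ * C :=
  calc B * D⁻¹ = A⁻¹ * (A * B) * D⁻¹ := by rw [← Matrix.mul_assoc, nonsing_inv_mul A hA, one_mul]
    _ = A⁻¹ * (C * D) * D⁻¹ := by rw [h]
    _ = A⁻¹ * C := by rw [Matrix.mul_assoc, Matrix.mul_assoc, mul_nonsing_inv D hD, mul_one]

end Matrix

namespace QGarnier

variable {K : Type*} [Field K]

def elementaryFactor (z u c : K) : Matrix (Fin 2) (Fin 2) K := !![u, 1; z, c / u]

theorem det_elementaryFactor (z c : K) {u : K} (hu : u ≠ 0) :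
    (elementaryFactor z u c).det = c - z := by
  simp only [elementaryFactor, Matrix.det_fin_two_of]
  field_simp

theorem isUnit_det_elementaryFactor {z u c : K} (hu : u ≠ 0) (hcz : c - z ≠ 0) :
    IsUnit (elementaryFactor z u c).det := by
  rw [det_elementaryFactor z c hu]
  exact hcz.isUnit

theorem elementaryFactor_mul_eq_of {z a b u v c d : K} (hmul : a * u = b * v)
    (hupper : a + c / u = b + d / v) (hlower : u + d / a = v + c / b) :
    elementaryFactor z a d * elementaryFactor z u c =
      elementaryFactor z b c * elementaryFactor z v d := by
  have hdiag : d / a * (c / u) = c / b * (d / v) := by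
    rw [div_mul_div_comm, div_mul_div_comm, hmul, mul_comm d c]
  have hlower' : z * u + d / a * z = z * v + c / b * z := by linear_combination z * hlower
  simp only [elementaryFactor, Matrix.mul_fin_two, mul_one, one_mul, hmul, hupper, hlower', hdiag]

theorem elementaryFactor_exchange (z uk ul ck cl : K) (huk : uk ≠ 0) (hul : ul ≠ 0)
    (hne : uk ≠ ul) (hc : ck * ul - cl * uk ≠ 0) :
    elementaryFactor z ((ck * ul - cl * uk) / ((uk - ul) * uk)) cl * elementaryFactor z uk ck =
      elementaryFactor z ((ck * ul - cl * uk) / ((uk - ul) * ul)) ck *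
        elementaryFactor z ul cl := by
  have hsub : uk - ul ≠ 0 := sub_ne_zero.mpr hne
  generalize hN : ck * ul - cl * uk = N at hc ⊢
  apply elementaryFactor_mul_eq_of <;> field_simp <;> rw [← hN] <;> ring

end QGarnier

theorem statement16 {K : Type*} [Field K] (z uk ul ck cl : K)
    (huk : uk ≠ 0) (hul : ul ≠ 0) (hne : uk ≠ ul)
    (hc : ck * ul - cl * uk ≠ 0) :
    (!![(ck * ul - cl * uk) / ((uk - ul) * uk), 1;
          z, cl / ((ck * ul - cl * uk) / ((uk - ul) * uk))] *
        !![uk, 1; z, ck / uk]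
      = !![(ck * ul - cl * uk) / ((uk - ul) * ul), 1;
            z, ck / ((ck * ul - cl * uk) / ((uk - ul) * ul))] *
          !![ul, 1; z, cl / ul]) ∧
    (cl - z ≠ 0 →
      !![uk, 1; z, ck / uk] * (!![ul, 1; z, cl / ul])⁻¹
        = (!![(ck * ul - cl * uk) / ((uk - ul) * uk), 1;
              z, cl / ((ck * ul - cl * uk) / ((uk - ul) * uk))])⁻¹ *
            !![(ck * ul - cl * uk) / ((uk - ul) * ul), 1;
              z, ck / ((ck * ul - cl * uk) / ((uk - ul) * ul))]) := by
  have hexchange := QGarnier.elementaryFactor_exchange z uk ul ck cl huk hul hne hc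
  refine ⟨hexchange, fun hdet => Matrix.mul_inv_eq_inv_mul_of_mul_eq_mul ?_ ?_ hexchange⟩
  · exact QGarnier.isUnit_det_elementaryFactor
      (div_ne_zero hc (mul_ne_zero (sub_ne_zero.mpr hne) huk)) hdet
  · exact QGarnier.isUnit_det_elementaryFactor hul hdet
end

section
/- Second elementary matrix move in the proof of Proposition 4.1 (exchange of X_k X_l into X'_l X'_k): let K be a field, and let z, u_k, u_l, c_k, c_l ∈ K with u_k ≠ 0, u_l ≠ 0, c_l + u_k u_l ≠ 0, and c_k + u_k u_l ≠ 0. Define u'_k = u_l (c_k + u_k u_l)/(c_l + u_k u_l) and u'_l = u_k (c_l + u_k u_l)/(c_k + u_k u_l) (both nonzero). Then [[u_k, 1],[z, c_k/u_k]] · [[u_l, 1],[z, c_l/u_l]] = [[u'_l, 1],[z, c_l/u'_l]] · [[u'_k, 1],[z, c_k/u'_k]]. -/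
/-!
A product `X(u, c) X(v, d)` of factors `X(u, c) = [[u, 1], [z, c/u]]` depends only on `u v`, `c d`
and the two cross sums `u + d/v`, `v + c/u`. The exchange keeps `u_k u_l` and `c_k c_l`, and a
short computation shows that it also keeps both cross sums.
-/

namespace QGarnier

variable {K : Type*} [Field K]

def laxFactor (z u c : K) : Matrix (Fin 2) (Fin 2) K := !![u, 1; z, c / u]

theorem laxFactor_mul_laxFactor (z u v c d : K) :
    laxFactor z u c * laxFactor z v d
      = !![u * v + z, u + d / v; (v + c / u) * z, z + c * d / (u * v)] := by
  rw [laxFactor, laxFactor, Matrix.mul_fin_two, div_mul_div_comm]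
  simp only [mul_one, one_mul, add_mul, mul_comm z]

theorem laxFactor_mul_laxFactor_eq {z u v c d u' v' c' d' : K}
    (hu : u * v = u' * v') (hc : c * d = c' * d')
    (hleft : u + d / v = u' + d' / v') (hright : v + c / u = v' + c' / u') :
    laxFactor z u c * laxFactor z v d = laxFactor z u' c' * laxFactor z v' d' := by
  rw [laxFactor_mul_laxFactor, laxFactor_mul_laxFactor, hu, hc, hleft, hright]

end QGarnier

theorem statement17 {K : Type*} [Field K] (z uk ul ck cl : K)
    (huk : uk ≠ 0) (hul : ul ≠ 0)
    (hl : cl + uk * ul ≠ 0) (hk : ck + uk * ul ≠ 0) :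
    !![uk, 1; z, ck / uk] * !![ul, 1; z, cl / ul]
      = !![uk * (cl + uk * ul) / (ck + uk * ul), 1;
            z, cl / (uk * (cl + uk * ul) / (ck + uk * ul))] *
          !![ul * (ck + uk * ul) / (cl + uk * ul), 1;
            z, ck / (ul * (ck + uk * ul) / (cl + uk * ul))] := by
  have hl' : cl + ul * uk ≠ 0 := by rwa [mul_comm]
  set ul' := uk * (cl + uk * ul) / (ck + uk * ul)
  set uk' := ul * (ck + uk * ul) / (cl + uk * ul)
  have hu : uk * ul = ul' * uk' := by
    simp only [ul', uk']
    field_simp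
  have hleft : uk + cl / ul = ul' + ck / uk' := by
    simp only [ul', uk']
    field_simp
    ring
  have hright : ul + ck / uk = uk' + cl / ul' := by
    simp only [ul', uk']
    field_simp
    ring
  exact QGarnier.laxFactor_mul_laxFactor_eq hu (mul_comm ck cl) hleft hright
end
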